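/- arXiv:math/0406226 — 3 statements merged into one kernel-verified Lean document; each statement's English description precedes it below -/
import Mathlib

section
/- Let X be a finite index set, let v ∈ X, and let X \ {v} = S ⊔ T be a partition. Let A be a symmetric real matrix indexed by X with A v v = 1 and with A s t = 0 for every s ∈ S and t ∈ T. Assume det A_S ≠ 0 and det A_T ≠ 0, where A_S and A_T denote the principal submatrices on S and on T. Then det A / (det A_S · det A_T) = det A_{S ∪ {v}} / det A_S + det A_{T ∪ {v}} / det A_T − 1. -/
open Matrix Real Finset

noncomputable section

/-- The principal submatrix of `A` with rows and columns indexed by `S`. -/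
def subm {n : Type*} (A : Matrix n n ℝ) (S : Finset n) : Matrix S S ℝ :=
  A.submatrix (fun i => (i : n)) (fun i => (i : n))

/-! Expanding `det A_{U ∪ {v}}` as a block determinant around the invertible block `A_U` gives
`det A_U · (A v v − r A_U⁻¹ c)`, with `r`, `c` the row and column of `v` over `U`; so the local
determinant `det(A_{U ∪ {v}}, v)` is the Schur complement `schurCompl A v U`. For `U = S ∪ T`
the block `A_U` is block diagonal (symmetry kills the `T × S` block as well), hence its
determinant and inverse split over `S` and `T`, and the Schur complement is additive up to the
shared diagonal entry `A v v = 1`. -/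

theorem submatrix_coe_eq_zero {X : Type*} (A : Matrix X X ℝ) {S T : Finset X}
    (hzero : ∀ s ∈ S, ∀ t ∈ T, A s t = 0) :
    A.submatrix ((↑) : S → X) ((↑) : T → X) = 0 := by
  ext s t
  exact hzero s s.2 t t.2

section

variable {X : Type*} [DecidableEq X] (A : Matrix X X ℝ) (v : X)

def schurCompl (U : Finset X) : ℝ :=
  A v v - (fun j : U => A v j) ⬝ᵥ (subm A U)⁻¹ *ᵥ fun i : U => A i v

theorem det_subm_insert {U : Finset X} (hvU : v ∉ U) (hU : (subm A U).det ≠ 0) :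
    (subm A (insert v U)).det = (subm A U).det * schurCompl A v U := by
  let e : U ⊕ Unit ≃ (insert v U : Finset X) :=
    ((subtypeInsertEquivOption hvU).trans (Equiv.optionEquivSumPUnit U)).symm
  have hblocks : (subm A (insert v U)).submatrix e e =
      fromBlocks (subm A U) (replicateCol Unit fun i : U => A i v)
        (replicateRow Unit fun j : U => A v j) (of fun _ _ => A v v) := by
    ext (i | i) (j | j) <;> rfl
  have := (subm A U).invertibleOfIsUnitDet hU.isUnit
  rw [← det_submatrix_equiv_self e, hblocks, det_fromBlocks₁₁, det_unique (n := Unit),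
    invOf_eq_nonsing_inv, Matrix.mul_assoc]
  rfl

theorem subm_union_submatrix_eq_fromBlocks {S T : Finset X} (hST : Disjoint S T) :
    (subm A (S ∪ T)).submatrix (Equiv.Finset.union S T hST) (Equiv.Finset.union S T hST) =
      fromBlocks (subm A S) (A.submatrix (↑) (↑)) (A.submatrix (↑) (↑)) (subm A T) := by
  ext (i | i) (j | j) <;> rfl

theorem det_subm_union {S T : Finset X} (hST : Disjoint S T)
    (hzero : ∀ s ∈ S, ∀ t ∈ T, A s t = 0) :
    (subm A (S ∪ T)).det = (subm A S).det * (subm A T).det := by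
  rw [← det_submatrix_equiv_self (Equiv.Finset.union S T hST),
    subm_union_submatrix_eq_fromBlocks A hST, submatrix_coe_eq_zero A hzero,
    det_fromBlocks_zero₁₂]

theorem schurCompl_union {S T : Finset X} (hST : Disjoint S T)
    (hzero : ∀ s ∈ S, ∀ t ∈ T, A s t = 0) (hzero' : ∀ t ∈ T, ∀ s ∈ S, A t s = 0)
    (hS : (subm A S).det ≠ 0) (hT : (subm A T).det ≠ 0) :
    schurCompl A v (S ∪ T) = schurCompl A v S + schurCompl A v T - A v v := by
  set e := Equiv.Finset.union S T hST
  have hunion :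
      subm A (S ∪ T) = (fromBlocks (subm A S) 0 0 (subm A T)).submatrix e.symm e.symm := by
    rw [← submatrix_coe_eq_zero A hzero, ← submatrix_coe_eq_zero A hzero',
      ← subm_union_submatrix_eq_fromBlocks A hST, submatrix_submatrix, Equiv.self_comp_symm,
      submatrix_id_id]
  have hinv : (fromBlocks (subm A S) 0 0 (subm A T))⁻¹ =
      fromBlocks (subm A S)⁻¹ 0 0 (subm A T)⁻¹ := by
    rw [inv_fromBlocks_zero₂₁_of_isUnit_iff _ _ _ <| iff_of_true
      ((isUnit_iff_isUnit_det _).mpr hS.isUnit) ((isUnit_iff_isUnit_det _).mpr hT.isUnit)]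
    simp
  have hrow : (fun j : (S ∪ T : Finset X) => A v j) ∘ e =
      Sum.elim (fun j : S => A v j) (fun j : T => A v j) := by
    ext (j | j) <;> rfl
  have hcol : (fun i : (S ∪ T : Finset X) => A i v) ∘ e =
      Sum.elim (fun i : S => A i v) (fun i : T => A i v) := by
    ext (i | i) <;> rfl
  rw [schurCompl, hunion, inv_submatrix_equiv, submatrix_mulVec_equiv, Equiv.symm_symm,
    dotProduct_comp_equiv_symm, hinv, hrow, hcol]
  simp only [fromBlocks_mulVec, Sum.elim_comp_inl, Sum.elim_comp_inr, zero_mulVec, add_zero,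
    zero_add, sumElim_dotProduct_sumElim, schurCompl]
  ring

theorem det_subm_univ [Fintype X] : (subm A univ).det = A.det :=
  det_submatrix_equiv_self (Equiv.subtypeUnivEquiv mem_univ) A

end

/-- Vinberg's summation formula for local determinants: if the diagram of `A` is
the union of two subdiagrams on `S ∪ {v}` and `T ∪ {v}` having the single vertex
`v` in common and otherwise not joined, then
`det(A, v) = det(A_{S∪{v}}, v) + det(A_{T∪{v}}, v) − 1`. -/
theorem stmt_14 {X : Type*} [Fintype X] [DecidableEq X]
    (v : X) (S T : Finset X)
    (hvS : v ∉ S) (hvT : v ∉ T) (hST : Disjoint S T)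
    (hcover : insert v (S ∪ T) = Finset.univ)
    (A : Matrix X X ℝ) (hsymm : A.IsSymm) (hvv : A v v = 1)
    (hzero : ∀ s ∈ S, ∀ t ∈ T, A s t = 0)
    (hS : (subm A S).det ≠ 0) (hT : (subm A T).det ≠ 0) :
    A.det / ((subm A S).det * (subm A T).det) =
      (subm A (insert v S)).det / (subm A S).det +
        (subm A (insert v T)).det / (subm A T).det - 1 := by
  have hzero' : ∀ t ∈ T, ∀ s ∈ S, A t s = 0 := fun t ht s hs =>
    (hsymm.apply t s).symm.trans (hzero s hs t ht)
  have hSTdet : (subm A (S ∪ T)).det ≠ 0 := by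
    rw [det_subm_union A hST hzero]
    exact mul_ne_zero hS hT
  have hdet : A.det = (subm A S).det * (subm A T).det * schurCompl A v (S ∪ T) := by
    rw [← det_subm_univ, ← hcover, det_subm_insert A v (by simp [hvS, hvT]) hSTdet,
      det_subm_union A hST hzero]
  rw [hdet, det_subm_insert A v hvS hS, det_subm_insert A v hvT hT,
    schurCompl_union A v hST hzero hzero' hS hT, hvv]
  field_simp

end
end

section
/- Define D(p,q,r) = 1 − (cos²(π/p) + cos²(π/q) + 2·cos(π/p)·cos(π/q)·cos(π/r)) / sin²(π/r) for integers p, q, r ≥ 2. Then: (1) if p ≤ p', q ≤ q', r ≤ r' are integers ≥ 2 with 1/p + 1/q + 1/r < 1, then |D(p,q,r)| ≤ |D(p',q',r')|; and (2) for fixed integers p, q ≥ 2 with 1/p + 1/q < 1, the quantity |D(p,q,r)| tends to infinity as the integer r tends to infinity. -/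
open Real

noncomputable section

/-- The local determinant `D(p,q,r)` of the order-3 Lannér diagram `L_{p,q,r}`
on the vertex not belonging to the edge of weight `cos (π/r)`. -/
noncomputable def D (p q r : ℕ) : ℝ :=
  1 - (Real.cos (Real.pi / p) ^ 2 + Real.cos (Real.pi / q) ^ 2 +
        2 * Real.cos (Real.pi / p) * Real.cos (Real.pi / q) * Real.cos (Real.pi / r)) /
      Real.sin (Real.pi / r) ^ 2

open Filter

/-!
With `a, b, c = cos (π/p), cos (π/q), cos (π/r)` and `sin² (π/r) = 1 - c²`, the local determinant
is `D(p,q,r) = (1 - a² - b² - c² - 2abc) / sin² (π/r)`. For angles `A, B, C ≥ 0` with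
`A + B + C < π` the numerator factors as `-(cos C + cos (A + B)) (cos C + cos (A - B)) < 0`, so in
the hyperbolic range `|D|` is `a² + b² + c² + 2abc - 1` divided by `sin² (π/r)`. The numerator
grows with `p, q, r` (the cosines are nonnegative and increasing) and the denominator decreases.
As `r → ∞` the numerator stays above a positive constant while `sin² (π/r) ≤ (π/r)²`, so `|D|`
grows at least quadratically in `r`.
-/

section PiDivNat

variable {m n : ℕ}

lemma pi_div_natCast_pos (hn : 0 < n) : 0 < π / n :=
  div_pos pi_pos (by exact_mod_cast hn)

lemma pi_div_natCast_le_pi_div_two (hn : 2 ≤ n) : π / n ≤ π / 2 :=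
  div_le_div_of_nonneg_left pi_pos.le two_pos (by exact_mod_cast hn)

lemma pi_div_natCast_anti (hm : 0 < m) (h : m ≤ n) : π / n ≤ π / m :=
  div_le_div_of_nonneg_left pi_pos.le (by exact_mod_cast hm) (by exact_mod_cast h)

lemma cos_pi_div_natCast_nonneg (hn : 2 ≤ n) : 0 ≤ cos (π / n) :=
  cos_nonneg_of_mem_Icc ⟨by linarith [pi_div_natCast_pos (by omega : 0 < n), pi_pos],
    pi_div_natCast_le_pi_div_two hn⟩

lemma cos_pi_div_natCast_mono (hm : 0 < m) (h : m ≤ n) : cos (π / m) ≤ cos (π / n) :=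
  cos_le_cos_of_nonneg_of_le_pi (pi_div_natCast_pos (hm.trans_le h)).le
    (div_le_self pi_pos.le (by exact_mod_cast hm)) (pi_div_natCast_anti hm h)

lemma sin_pi_div_natCast_pos (hn : 2 ≤ n) : 0 < sin (π / n) :=
  sin_pos_of_pos_of_lt_pi (pi_div_natCast_pos (by omega))
    (by linarith [pi_div_natCast_le_pi_div_two hn, pi_pos])

lemma sin_pi_div_natCast_anti (hm : 2 ≤ m) (h : m ≤ n) : sin (π / n) ≤ sin (π / m) :=
  sin_le_sin_of_le_of_le_pi_div_two (by linarith [pi_div_natCast_pos (by omega : 0 < n), pi_pos])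
    (pi_div_natCast_le_pi_div_two hm) (pi_div_natCast_anti (by omega) h)

end PiDivNat

/-- The determinant of the Gram matrix `!![1, -a, -b; -a, 1, -c; -b, -c, 1]` of `L_{p,q,r}` when
`a, b, c = cos (π/p), cos (π/q), cos (π/r)`. -/
def gramDet (a b c : ℝ) : ℝ := 1 - a ^ 2 - b ^ 2 - c ^ 2 - 2 * a * b * c

lemma gramDet_anti {a b c a' b' c' : ℝ} (ha : 0 ≤ a) (hb : 0 ≤ b) (hc : 0 ≤ c)
    (haa : a ≤ a') (hbb : b ≤ b') (hcc : c ≤ c') : gramDet a' b' c' ≤ gramDet a b c := by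
  have ha' := ha.trans haa
  have hb' := hb.trans hbb
  unfold gramDet
  gcongr

lemma gramDet_cos_neg {A B C : ℝ} (hA : 0 ≤ A) (hB : 0 ≤ B) (hC : 0 ≤ C) (hsum : A + B + C < π) :
    gramDet (cos A) (cos B) (cos C) < 0 := by
  have hfactor : gramDet (cos A) (cos B) (cos C) =
      -((cos C + cos (A + B)) * (cos C + cos (A - B))) := by
    rw [gramDet, cos_add, cos_sub]
    linear_combination
      -(1 - cos B ^ 2) * sin_sq_add_cos_sq A - sin A ^ 2 * sin_sq_add_cos_sq B
  have hsum_pos : 0 < cos C + cos (A + B) := by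
    have := cos_lt_cos_of_nonneg_of_le_pi hC (by linarith) (by linarith : C < π - (A + B))
    rw [cos_pi_sub] at this
    linarith
  have hdiff_pos : 0 < cos C + cos (A - B) := by
    have := cos_lt_cos_of_nonneg_of_le_pi (abs_nonneg (A - B)) (by linarith)
      (abs_sub_lt_iff.2 ⟨by linarith, by linarith⟩ : |A - B| < π - C)
    rw [cos_pi_sub, cos_abs] at this
    linarith
  rw [hfactor, neg_lt_zero]
  exact mul_pos hsum_pos hdiff_pos

lemma D_eq_gramDet_div {p q r : ℕ} (hr : 2 ≤ r) :
    D p q r = gramDet (cos (π / p)) (cos (π / q)) (cos (π / r)) / sin (π / r) ^ 2 := by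
  have hs := (sin_pi_div_natCast_pos hr).ne'
  rw [D, gramDet, eq_div_iff (pow_ne_zero 2 hs), sub_mul, div_mul_cancel₀ _ (pow_ne_zero 2 hs),
    sin_sq]
  ring

section Hyperbolic

variable {p q r : ℕ} (hp : 2 ≤ p) (hq : 2 ≤ q) (hr : 2 ≤ r)
include hp hq hr

lemma gramDet_cos_pi_div_neg (hL : (1 : ℝ) / p + 1 / q + 1 / r < 1) :
    gramDet (cos (π / p)) (cos (π / q)) (cos (π / r)) < 0 := by
  refine gramDet_cos_neg (pi_div_natCast_pos (by omega)).le (pi_div_natCast_pos (by omega)).le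
    (pi_div_natCast_pos (by omega)).le ?_
  calc π / p + π / q + π / r = π * (1 / p + 1 / q + 1 / r) := by ring
    _ < π * 1 := by gcongr
    _ = π := mul_one π

lemma abs_D_eq (hL : (1 : ℝ) / p + 1 / q + 1 / r < 1) :
    |D p q r| = -gramDet (cos (π / p)) (cos (π / q)) (cos (π / r)) / sin (π / r) ^ 2 := by
  rw [D_eq_gramDet_div hr, abs_div, abs_of_neg (gramDet_cos_pi_div_neg hp hq hr hL), abs_sq]

lemma abs_D_mono {p' q' r' : ℕ} (hpp : p ≤ p') (hqq : q ≤ q') (hrr : r ≤ r')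
    (hL : (1 : ℝ) / p + 1 / q + 1 / r < 1) : |D p q r| ≤ |D p' q' r'| := by
  have hp' := hp.trans hpp
  have hq' := hq.trans hqq
  have hr' := hr.trans hrr
  have hL' : (1 : ℝ) / p' + 1 / q' + 1 / r' < 1 := by
    refine lt_of_le_of_lt ?_ hL
    gcongr
  have hgram := gramDet_anti (cos_pi_div_natCast_nonneg hp) (cos_pi_div_natCast_nonneg hq)
    (cos_pi_div_natCast_nonneg hr) (cos_pi_div_natCast_mono (by omega) hpp)
    (cos_pi_div_natCast_mono (by omega) hqq) (cos_pi_div_natCast_mono (by omega) hrr)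
  rw [abs_D_eq hp hq hr hL, abs_D_eq hp' hq' hr' hL']
  apply div_le_div₀ (neg_nonneg.2 (gramDet_cos_pi_div_neg hp' hq' hr' hL').le) (neg_le_neg hgram)
    (pow_pos (sin_pi_div_natCast_pos hr') 2)
    (pow_le_pow_left₀ (sin_pi_div_natCast_pos hr').le (sin_pi_div_natCast_anti hr hrr) 2)

end Hyperbolic

lemma tendsto_abs_D {p q : ℕ} (hp : 2 ≤ p) (hq : 2 ≤ q) (hL : (1 : ℝ) / p + 1 / q < 1) :
    Tendsto (fun r : ℕ => |D p q r|) atTop atTop := by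
  have hev : ∀ᶠ r : ℕ in atTop, 2 ≤ r ∧ (1 : ℝ) / p + 1 / q + 1 / r < 1 := by
    refine (eventually_ge_atTop 2).and ?_
    have := (tendsto_one_div_atTop_nhds_zero_nat (𝕜 := ℝ)).const_add ((1 : ℝ) / p + 1 / q)
    rw [add_zero] at this
    exact this.eventually_lt_const hL
  obtain ⟨r₀, hr₀⟩ := eventually_atTop.1 hev
  obtain ⟨hr2₀, hL₀⟩ := hr₀ r₀ le_rfl
  set κ := -gramDet (cos (π / p)) (cos (π / q)) (cos (π / r₀))
  have hκ : 0 < κ := neg_pos.2 (gramDet_cos_pi_div_neg hp hq hr2₀ hL₀)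
  have hquad : Tendsto (fun r : ℕ => κ / π ^ 2 * (r : ℝ) ^ 2) atTop atTop :=
    ((tendsto_pow_atTop two_ne_zero).comp tendsto_natCast_atTop_atTop).const_mul_atTop
      (by positivity)
  refine tendsto_atTop_mono' _ ?_ hquad
  filter_upwards [eventually_ge_atTop r₀] with r hr
  obtain ⟨hr2, hL'⟩ := hr₀ r hr
  -- `sin x ≤ x` turns `1 / sin² (π/r)` into a quadratic lower bound in `r`.
  have hsin_le : sin (π / r) ^ 2 ≤ (π / r) ^ 2 :=
    pow_le_pow_left₀ (sin_pi_div_natCast_pos hr2).le (sin_le (pi_div_natCast_pos (by omega)).le) 2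
  calc κ / π ^ 2 * (r : ℝ) ^ 2 = κ / (π / r) ^ 2 := by
        have : (r : ℝ) ≠ 0 := by positivity
        field_simp
    _ ≤ κ / sin (π / r) ^ 2 := div_le_div_of_nonneg_left hκ.le
      (pow_pos (sin_pi_div_natCast_pos hr2) 2) hsin_le
    _ ≤ |D p q r| := by
        rw [abs_D_eq hp hq hr2 hL']
        gcongr
        exact neg_le_neg <| gramDet_anti (cos_pi_div_natCast_nonneg hp)
          (cos_pi_div_natCast_nonneg hq) (cos_pi_div_natCast_nonneg hr2₀) le_rfl le_rfl
          (cos_pi_div_natCast_mono (by omega) hr)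

theorem stmt_17 :
    (∀ p q r p' q' r' : ℕ, 2 ≤ p → 2 ≤ q → 2 ≤ r →
      p ≤ p' → q ≤ q' → r ≤ r' →
      (1 : ℝ) / p + 1 / q + 1 / r < 1 →
      |D p q r| ≤ |D p' q' r'|) ∧
    (∀ p q : ℕ, 2 ≤ p → 2 ≤ q → (1 : ℝ) / p + 1 / q < 1 →
      Filter.Tendsto (fun r : ℕ => |D p q r|) Filter.atTop Filter.atTop) :=
  ⟨fun _ _ _ _ _ _ hp hq hr hpp hqq hrr hL => abs_D_mono hp hq hr hpp hqq hrr hL,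
    fun _ _ hp hq hL => tendsto_abs_D hp hq hL⟩

end
end

section
/- For all integers p, q, r ≥ 2 with 1/p + 1/q + 1/r < 1, the determinant of the symmetric 3×3 matrix with rows [1, −cos(π/p), −cos(π/q)], [−cos(π/p), 1, −cos(π/r)], [−cos(π/q), −cos(π/r), 1] is at most 3/4 − cos²(π/7), i.e. det of the Gram matrix of the Lannér triangle (p,q,r) is maximal for (p,q,r) = (2,3,7). Equivalently, 1 − cos²(π/p) − cos²(π/q) − cos²(π/r) − 2·cos(π/p)·cos(π/q)·cos(π/r) ≤ 3/4 − cos²(π/7) for all such p, q, r. -/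
open Matrix Real

noncomputable section

private def f18 (a b c : ℝ) : ℝ := 1 - a ^ 2 - b ^ 2 - c ^ 2 - 2 * a * b * c

private lemma f18_mono {a b c a₀ b₀ c₀ : ℝ} (ha0 : 0 ≤ a₀) (hb0 : 0 ≤ b₀) (hc0 : 0 ≤ c₀)
    (ha : a₀ ≤ a) (hb : b₀ ≤ b) (hc : c₀ ≤ c) : f18 a b c ≤ f18 a₀ b₀ c₀ := by
  have hb' : 0 ≤ b := hb0.trans hb
  have hc' : 0 ≤ c := hc0.trans hc
  unfold f18
  nlinarith [mul_nonneg (mul_nonneg (sub_nonneg.2 ha) hb') hc',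
    mul_nonneg (mul_nonneg ha0 (sub_nonneg.2 hb)) hc',
    mul_nonneg (mul_nonneg ha0 hb0) (sub_nonneg.2 hc),
    mul_nonneg ha0 (sub_nonneg.2 ha), mul_nonneg hb0 (sub_nonneg.2 hb),
    mul_nonneg hc0 (sub_nonneg.2 hc),
    mul_self_nonneg (a - a₀), mul_self_nonneg (b - b₀), mul_self_nonneg (c - c₀)]

private lemma cos_div_nonneg {n : ℕ} (hn : 2 ≤ n) : 0 ≤ Real.cos (π / n) := by
  have h2 : (2 : ℝ) ≤ n := by exact_mod_cast hn
  have hpi := Real.pi_pos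
  have h0 : 0 ≤ π / n := div_nonneg hpi.le (by linarith)
  apply Real.cos_nonneg_of_mem_Icc
  constructor
  · linarith
  · rw [div_le_div_iff₀ (by linarith) (by norm_num)]
    nlinarith

private lemma cos_div_mono {n m : ℕ} (hn : 2 ≤ n) (hnm : n ≤ m) :
    Real.cos (π / n) ≤ Real.cos (π / m) := by
  have hn' : (1:ℝ) ≤ n := by exact_mod_cast (by omega : 1 ≤ n)
  have hm' : (0 : ℝ) < m := by exact_mod_cast (by omega : 0 < m)
  have hpi := Real.pi_pos
  apply Real.cos_le_cos_of_nonneg_of_le_pi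
  · positivity
  · rw [div_le_iff₀ (by linarith)]
    nlinarith
  · have hnm' : (n:ℝ) ≤ m := by exact_mod_cast hnm
    rw [div_le_div_iff₀ (by linarith) (by linarith)]
    nlinarith

set_option maxHeartbeats 1000000 in
/-- The sorted case. -/
private lemma sorted18 (p q r : ℕ) (hp : 2 ≤ p) (hpq : p ≤ q) (hqr : q ≤ r)
    (hlan : (1 : ℝ) / p + 1 / q + 1 / r < 1) :
    f18 (Real.cos (π / p)) (Real.cos (π / q)) (Real.cos (π / r)) ≤
      3 / 4 - Real.cos (π / 7) ^ 2 := by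
  have hq : 2 ≤ q := hp.trans hpq
  have hr : 2 ≤ r := hq.trans hqr
  have hpi := Real.pi_pos
  have c7 : Real.cos (π / 7) ≤ Real.cos (π / 8) :=
    Real.cos_le_cos_of_nonneg_of_le_pi (by positivity) (by linarith [Real.pi_pos]) (by linarith)
  have c70 : 0 ≤ Real.cos (π / 7) := by
    have h := cos_div_nonneg (n := 7) (by norm_num)
    norm_num at h
    exact h
  have c71 : Real.cos (π / 7) ≤ 1 := Real.cos_le_one _
  have s2 : Real.sqrt 2 ^ 2 = 2 := Real.sq_sqrt (by norm_num)
  have s2' : 0 ≤ Real.sqrt 2 := Real.sqrt_nonneg 2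
  have s5 : Real.sqrt 5 ^ 2 = 5 := Real.sq_sqrt (by norm_num)
  have s5' : 0 ≤ Real.sqrt 5 := Real.sqrt_nonneg 5
  have s2p2 : Real.sqrt (2 + Real.sqrt 2) ^ 2 = 2 + Real.sqrt 2 :=
    Real.sq_sqrt (by positivity)
  have s2ub : Real.sqrt 2 ≤ 3 / 2 := by nlinarith [sq_nonneg (Real.sqrt 2 - 3/2)]
  have s5lb : (2:ℝ) ≤ Real.sqrt 5 := by nlinarith
  -- bound cos(π/7)^2 ≤ (2+√2)/4
  have csq1 : Real.cos (π / 7) ^ 2 ≤ 1 := by nlinarith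
  have c7sq : Real.cos (π / 7) ^ 2 ≤ (2 + Real.sqrt 2) / 4 := by
    have h8 : Real.cos (π / 8) = Real.sqrt (2 + Real.sqrt 2) / 2 := Real.cos_pi_div_eight
    nlinarith [c7, c70]
  have cp2 : Real.cos (π / ((2:ℕ):ℝ)) = 0 := by norm_num [Real.cos_pi_div_two]
  have cp3 : Real.cos (π / ((3:ℕ):ℝ)) = 1 / 2 := by norm_num [Real.cos_pi_div_three]
  have cp4 : Real.cos (π / ((4:ℕ):ℝ)) = Real.sqrt 2 / 2 := by norm_num [Real.cos_pi_div_four]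
  have cp5 : Real.cos (π / ((5:ℕ):ℝ)) = (1 + Real.sqrt 5) / 4 := by
    norm_num [Real.cos_pi_div_five]
  have cp7 : Real.cos (π / ((7:ℕ):ℝ)) = Real.cos (π / 7) := by norm_num
  rcases Nat.lt_or_ge p 3 with hp3 | hp3
  · -- p = 2
    have hpe : p = 2 := by omega
    subst hpe
    rcases Nat.lt_or_ge q 4 with hq4 | hq4
    · interval_cases q
      · -- q = 2 : contradiction
        exfalso
        have hr' : (0:ℝ) < r := by exact_mod_cast (by omega : 0 < r)
        have : (0:ℝ) < 1 / r := by positivity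
        norm_num at hlan
        linarith
      · -- q = 3, so r ≥ 7
        have hr7 : 7 ≤ r := by
          by_contra h
          push_neg at h
          interval_cases r <;> norm_num at hlan
        have key := f18_mono (a₀ := Real.cos (π / ((2:ℕ):ℝ))) (b₀ := Real.cos (π / ((3:ℕ):ℝ)))
          (c₀ := Real.cos (π / ((7:ℕ):ℝ))) (by rw [cp2]) (by rw [cp3]; norm_num)
          (by rw [cp7]; exact c70)
          le_rfl le_rfl (cos_div_mono (by norm_num) hr7)
        refine key.trans ?_
        rw [cp2, cp3, cp7]
        unfold f18
        ring_nf
        exact le_rfl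
    · -- q ≥ 5 would be hq4 : q ≥ 4; split on q = 4 handled above via interval_cases; here q ≥ 4
      rcases Nat.lt_or_ge q 5 with hq5 | hq5
      · -- q = 4, r ≥ 5
        have hqe : q = 4 := by omega
        subst hqe
        have hr5 : 5 ≤ r := by
          by_contra h
          push_neg at h
          interval_cases r <;> norm_num at hlan
        have key := f18_mono (a₀ := Real.cos (π / ((2:ℕ):ℝ))) (b₀ := Real.cos (π / ((4:ℕ):ℝ)))
          (c₀ := Real.cos (π / ((5:ℕ):ℝ))) (by rw [cp2]) (by rw [cp4]; positivity)
          (by rw [cp5]; positivity)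
          le_rfl le_rfl (cos_div_mono (by norm_num) hr5)
        refine key.trans ?_
        rw [cp2, cp4, cp5]
        unfold f18
        nlinarith [c7sq]
      · -- q ≥ 5, r ≥ 5
        have key := f18_mono (a₀ := Real.cos (π / ((2:ℕ):ℝ))) (b₀ := Real.cos (π / ((5:ℕ):ℝ)))
          (c₀ := Real.cos (π / ((5:ℕ):ℝ))) (by rw [cp2]) (by rw [cp5]; positivity)
          (by rw [cp5]; positivity)
          le_rfl (cos_div_mono (by norm_num) hq5) (cos_div_mono (by norm_num) (hq5.trans hqr))
        refine key.trans ?_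
        rw [cp2, cp5]
        unfold f18
        nlinarith [csq1, s5, s5lb, s5']
  · rcases Nat.lt_or_ge q 4 with hq4 | hq4
    · -- p = q = 3, r ≥ 4
      have hpe : p = 3 := by omega
      have hqe : q = 3 := by omega
      subst hpe; subst hqe
      have hr4 : 4 ≤ r := by
        by_contra h
        push_neg at h
        interval_cases r <;> norm_num at hlan
      have key := f18_mono (a₀ := Real.cos (π / ((3:ℕ):ℝ))) (b₀ := Real.cos (π / ((3:ℕ):ℝ)))
        (c₀ := Real.cos (π / ((4:ℕ):ℝ))) (by rw [cp3]; norm_num) (by rw [cp3]; norm_num)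
        (by rw [cp4]; positivity)
        le_rfl le_rfl (cos_div_mono (by norm_num) hr4)
      refine key.trans ?_
      rw [cp3, cp4]
      unfold f18
      nlinarith [csq1, s2, s2', s2ub]
    · -- p ≥ 3, q ≥ 4, r ≥ 4
      have hr4 : 4 ≤ r := hq4.trans hqr
      have key := f18_mono (a₀ := Real.cos (π / ((3:ℕ):ℝ))) (b₀ := Real.cos (π / ((4:ℕ):ℝ)))
        (c₀ := Real.cos (π / ((4:ℕ):ℝ))) (by rw [cp3]; norm_num) (by rw [cp4]; positivity)
        (by rw [cp4]; positivity)
        (cos_div_mono (by norm_num) hp3) (cos_div_mono (by norm_num) hq4)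
        (cos_div_mono (by norm_num) hr4)
      refine key.trans ?_
      rw [cp3, cp4]
      unfold f18
      nlinarith [csq1, s2, s2', s2ub]

private lemma main18 (p q r : ℕ) (hp : 2 ≤ p) (hq : 2 ≤ q) (hr : 2 ≤ r)
    (hlan : (1 : ℝ) / p + 1 / q + 1 / r < 1) :
    f18 (Real.cos (π / p)) (Real.cos (π / q)) (Real.cos (π / r)) ≤
      3 / 4 - Real.cos (π / 7) ^ 2 := by
  have sym1 : ∀ a b c : ℝ, f18 a b c = f18 b a c := by intros; unfold f18; ring
  have sym2 : ∀ a b c : ℝ, f18 a b c = f18 a c b := by intros; unfold f18; ring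
  have sym3 : ∀ a b c : ℝ, f18 a b c = f18 c a b := by intros; unfold f18; ring
  have sym4 : ∀ a b c : ℝ, f18 a b c = f18 b c a := by intros; unfold f18; ring
  have sym5 : ∀ a b c : ℝ, f18 a b c = f18 c b a := by intros; unfold f18; ring
  rcases le_total p q with h1 | h1 <;> rcases le_total q r with h2 | h2 <;>
    rcases le_total p r with h3 | h3
  · exact sorted18 p q r hp h1 h2 hlan
  · exact sorted18 p q r hp h1 h2 hlan
  · rw [sym2]; exact sorted18 p r q hp h3 h2 (by linarith)
  · rw [sym3]; exact sorted18 r p q hr h3 h1 (by linarith)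
  · rw [sym1]; exact sorted18 q p r hq h1 h3 (by linarith)
  · rw [sym4]; exact sorted18 q r p hq h2 h3 (by linarith)
  · rw [sym5]; exact sorted18 r q p hr h2 h1 (by linarith)
  · rw [sym5]; exact sorted18 r q p hr h2 h1 (by linarith)

/-- Among all Lannér triangles `(p,q,r)` (i.e. `1/p + 1/q + 1/r < 1`), the
determinant of the Gram matrix is maximal for `(p,q,r) = (2,3,7)`, whose
determinant is `3/4 − cos²(π/7)`. -/
theorem stmt_18 (p q r : ℕ) (hp : 2 ≤ p) (hq : 2 ≤ q) (hr : 2 ≤ r)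
    (hlan : (1 : ℝ) / p + 1 / q + 1 / r < 1) :
    Matrix.det !![(1 : ℝ), -Real.cos (Real.pi / p), -Real.cos (Real.pi / q);
                  -Real.cos (Real.pi / p), 1, -Real.cos (Real.pi / r);
                  -Real.cos (Real.pi / q), -Real.cos (Real.pi / r), 1] ≤
      3 / 4 - Real.cos (Real.pi / 7) ^ 2 ∧
    1 - Real.cos (Real.pi / p) ^ 2 - Real.cos (Real.pi / q) ^ 2 -
        Real.cos (Real.pi / r) ^ 2 -
        2 * Real.cos (Real.pi / p) * Real.cos (Real.pi / q) * Real.cos (Real.pi / r) ≤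
      3 / 4 - Real.cos (Real.pi / 7) ^ 2 := by
  have key := main18 p q r hp hq hr hlan
  unfold f18 at key
  constructor
  · have hdet : Matrix.det !![(1 : ℝ), -Real.cos (Real.pi / p), -Real.cos (Real.pi / q);
                  -Real.cos (Real.pi / p), 1, -Real.cos (Real.pi / r);
                  -Real.cos (Real.pi / q), -Real.cos (Real.pi / r), 1] =
        1 - Real.cos (Real.pi / p) ^ 2 - Real.cos (Real.pi / q) ^ 2 -
        Real.cos (Real.pi / r) ^ 2 -
        2 * Real.cos (Real.pi / p) * Real.cos (Real.pi / q) * Real.cos (Real.pi / r) := by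
      simp [Matrix.det_fin_three]
      ring
    rw [hdet]
    exact key
  · exact key

end
end
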